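/- arXiv:2307.05062 — 5 statements merged into one kernel-verified Lean document; each statement's English description precedes it below -/
import Mathlib

section
/- Let K be a consistent belief set and let ⊙ be an operator on K satisfying, for all sentences α: closure (K⊙α = Cn(K⊙α)), consistency preservation (if K is consistent then K⊙α is consistent), weak relative success (α ∈ K⊙α or K⊙α ⊆ K) and N-recovery (K ⊆ (K⊙α) + ¬α). Then for every inconsistent sentence α (i.e. ⊥ ∈ Cn({α}), equivalently ‖α‖ = ∅), it holds that K⊙α = K. -/
/-- A propositional language `L`: a type of sentences closed under the
truth-functional connectives, together with a consequence operator `Cn`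
satisfying inclusion, monotony, iteration, supraclassicality, compactness
and deduction. Supraclassicality is expressed via Boolean valuations that
respect the connectives. -/
structure PropLanguage where
  Sentence : Type
  falsum : Sentence
  neg : Sentence → Sentence
  conj : Sentence → Sentence → Sentence
  disj : Sentence → Sentence → Sentence
  impl : Sentence → Sentence → Sentence
  biimpl : Sentence → Sentence → Sentence
  Cn : Set Sentence → Set Sentence
  cn_inclusion : ∀ A : Set Sentence, A ⊆ Cn A
  cn_monotony : ∀ A B : Set Sentence, A ⊆ B → Cn A ⊆ Cn B
  cn_iteration : ∀ A : Set Sentence, Cn (Cn A) = Cn A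
  cn_supraclassical : ∀ (A : Set Sentence) (α : Sentence),
    (∀ v : Sentence → Bool,
        v falsum = false →
        (∀ β, v (neg β) = !v β) →
        (∀ β γ, v (conj β γ) = (v β && v γ)) →
        (∀ β γ, v (disj β γ) = (v β || v γ)) →
        (∀ β γ, v (impl β γ) = (!v β || v γ)) →
        (∀ β γ, v (biimpl β γ) = (v β == v γ)) →
        (∀ β ∈ A, v β = true) → v α = true) →
    α ∈ Cn A
  cn_compact : ∀ (A : Set Sentence) (α : Sentence), α ∈ Cn A →
    ∃ A' : Set Sentence, A' ⊆ A ∧ A'.Finite ∧ α ∈ Cn A'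
  cn_deduction : ∀ (A : Set Sentence) (α β : Sentence),
    β ∈ Cn (A ∪ {α}) ↔ impl α β ∈ Cn A

namespace PropLanguage

variable (L : PropLanguage)

/-- A set of sentences is consistent iff it does not entail falsum. -/
def Consistent (A : Set L.Sentence) : Prop := L.falsum ∉ L.Cn A

/-- A belief set: a logically closed set of sentences. -/
def IsBeliefSet (K : Set L.Sentence) : Prop := K = L.Cn K

/-- Expansion: `K + α = Cn (K ∪ {α})`. -/
def expand (K : Set L.Sentence) (α : L.Sentence) : Set L.Sentence :=
  L.Cn (K ∪ {α})

/-- A possible world: a maximal consistent set of sentences. -/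
def IsWorld (M : Set L.Sentence) : Prop :=
  L.Consistent M ∧ ∀ M' : Set L.Sentence, L.Consistent M' → M ⊆ M' → M' = M

/-- `‖R‖`: the set of possible worlds containing `R`. -/
def worldsOf (R : Set L.Sentence) : Set (Set L.Sentence) :=
  {M | L.IsWorld M ∧ R ⊆ M}

/-- `‖α‖`: the set of possible worlds containing `Cn {α}`. -/
def wS (α : L.Sentence) : Set (Set L.Sentence) := L.worldsOf (L.Cn {α})

/-- `⋂ X`: the set of sentences belonging to every world in `X`. -/
def th (X : Set (Set L.Sentence)) : Set L.Sentence := {φ | ∀ M ∈ X, φ ∈ M}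

/-! ### Postulates for an operator `od` on a belief set `K` -/

/-- Weak relative success: `α ∈ K⊙α` or `K⊙α ⊆ K`. -/
def WeakRelativeSuccess (K : Set L.Sentence) (od : L.Sentence → Set L.Sentence) : Prop :=
  ∀ α, α ∈ od α ∨ od α ⊆ K

/-- Closure: `K⊙α = Cn (K⊙α)`. -/
def Closure (od : L.Sentence → Set L.Sentence) : Prop :=
  ∀ α, od α = L.Cn (od α)

/-- Inclusion: `K⊙α ⊆ K + α`. -/
def Inclusion (K : Set L.Sentence) (od : L.Sentence → Set L.Sentence) : Prop :=
  ∀ α, od α ⊆ L.expand K α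

/-- Consistency preservation: if `K` is consistent then `K⊙α` is consistent. -/
def ConsistencyPreservation (K : Set L.Sentence) (od : L.Sentence → Set L.Sentence) : Prop :=
  L.Consistent K → ∀ α, L.Consistent (od α)

/-- Vacuity: if `¬α ∉ K` then `K + α ⊆ K⊙α`. -/
def Vacuity (K : Set L.Sentence) (od : L.Sentence → Set L.Sentence) : Prop :=
  ∀ α, L.neg α ∉ K → L.expand K α ⊆ od α

/-- Weak vacuity: if `¬α ∉ K` then `K ⊆ K⊙α`. -/
def WeakVacuity (K : Set L.Sentence) (od : L.Sentence → Set L.Sentence) : Prop :=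
  ∀ α, L.neg α ∉ K → K ⊆ od α

/-- Extensionality: if `⊢ α ↔ β` then `K⊙α = K⊙β`. -/
def Extensionality (od : L.Sentence → Set L.Sentence) : Prop :=
  ∀ α β, L.biimpl α β ∈ L.Cn ∅ → od α = od β

/-- Strict improvement: if `α ∈ K⊙α` and `⊢ α → β` then `β ∈ K⊙β`. -/
def StrictImprovement (od : L.Sentence → Set L.Sentence) : Prop :=
  ∀ α β, α ∈ od α → L.impl α β ∈ L.Cn ∅ → β ∈ od β

/-- N-persistence: if `¬β ∈ K⊙β` then `¬β ∈ K⊙α` for all `α`. -/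
def NPersistence (od : L.Sentence → Set L.Sentence) : Prop :=
  ∀ α β, L.neg β ∈ od β → L.neg β ∈ od α

/-- N-recovery: `K ⊆ (K⊙α) + ¬α`. -/
def NRecovery (K : Set L.Sentence) (od : L.Sentence → Set L.Sentence) : Prop :=
  ∀ α, K ⊆ L.expand (od α) (L.neg α)

/-- Disjunctive overlap: `K⊙α ∩ K⊙β ⊆ K⊙(α ∨ β)`. -/
def DisjunctiveOverlap (od : L.Sentence → Set L.Sentence) : Prop :=
  ∀ α β, od α ∩ od β ⊆ od (L.disj α β)

/-- Disjunctive inclusion: if `¬α ∉ K⊙(α ∨ β)` then `K⊙(α ∨ β) ⊆ K⊙α`. -/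
def DisjunctiveInclusion (od : L.Sentence → Set L.Sentence) : Prop :=
  ∀ α β, L.neg α ∉ od (L.disj α β) → od (L.disj α β) ⊆ od α

/-- Weak disjunctive inclusion: if `¬α ∉ K⊙(α ∨ β)` then
`(K⊙(α ∨ β)) + (α ∨ β) ⊆ (K⊙α) + α`. -/
def WeakDisjunctiveInclusion (od : L.Sentence → Set L.Sentence) : Prop :=
  ∀ α β, L.neg α ∉ od (L.disj α β) →
    L.expand (od (L.disj α β)) (L.disj α β) ⊆ L.expand (od α) α

/-! ### AGM revision and two level credibility-limited revision -/

/-- An AGM revision on `K`: postulates (⋆1)–(⋆8). -/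
def IsAGMRevision (K : Set L.Sentence) (star : L.Sentence → Set L.Sentence) : Prop :=
  (∀ α, star α = L.Cn (star α)) ∧
  (∀ α, α ∈ star α) ∧
  (∀ α, star α ⊆ L.expand K α) ∧
  (∀ α, L.neg α ∉ K → L.expand K α ⊆ star α) ∧
  (∀ α, L.Consistent {α} → L.Consistent (star α)) ∧
  (∀ α β, L.biimpl α β ∈ L.Cn ∅ → star α = star β) ∧
  (∀ α β, star α ∩ star β ⊆ star (L.disj α β)) ∧
  (∀ α β, L.neg α ∉ star (L.disj α β) → star (L.disj α β) ⊆ star α)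

/-- `od` is the two level CL revision operator induced by `star`, `CH`, `CL`:
`K⊙α = K⋆α` if `α ∈ C_H`; `K⊙α = (K⋆α) ∩ K` if `α ∈ C_L`;
`K⊙α = K` if `α ∉ C_H ∪ C_L`. -/
def IsTwoLevelCL (K : Set L.Sentence) (od star : L.Sentence → Set L.Sentence)
    (CH CL : Set L.Sentence) : Prop :=
  ∀ α, (α ∈ CH → od α = star α) ∧ (α ∈ CL → od α = star α ∩ K) ∧
    (α ∉ CH ∪ CL → od α = K)

/-- Credibility of logical equivalents. -/
def CredLogEquiv (C : Set L.Sentence) : Prop :=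
  ∀ α β, L.biimpl α β ∈ L.Cn ∅ → (α ∈ C ↔ β ∈ C)

/-- Single sentence closure. -/
def SingleSentenceClosure (C : Set L.Sentence) : Prop :=
  ∀ α ∈ C, L.Cn {α} ⊆ C

/-- Element consistency. -/
def ElementConsistency (C : Set L.Sentence) : Prop :=
  ∀ α ∈ C, L.Consistent {α}

/-- Credibility lower bounding (w.r.t. `K`). -/
def CredLowerBound (K C : Set L.Sentence) : Prop :=
  L.Consistent K → K ⊆ C

/-- Condition (C - ⋆): if `α ∉ C` and `β ∈ C` then `¬α ∈ K⋆β`. -/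
def CondCStar (K : Set L.Sentence) (star : L.Sentence → Set L.Sentence)
    (C : Set L.Sentence) : Prop :=
  ∀ α β, α ∉ C → β ∈ C → L.neg α ∈ star β

/-! ### Two level systems of spheres -/

/-- `(Si, S)` is a two level system of spheres centred on `‖K‖`. -/
def IsTwoLevelSystem (K : Set L.Sentence)
    (Si S : Set (Set (Set L.Sentence))) : Prop :=
  (∀ X ∈ S, ∀ M ∈ X, L.IsWorld M) ∧
  (∀ U ∈ S, ∀ V ∈ S, U ⊆ V ∨ V ⊆ U) ∧
  (∀ U ∈ Si, ∀ V ∈ Si, U ⊆ V ∨ V ⊆ U) ∧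
  L.worldsOf K ∈ S ∧ (∀ U ∈ S, L.worldsOf K ⊆ U) ∧
  L.worldsOf K ∈ Si ∧ (∀ U ∈ Si, L.worldsOf K ⊆ U) ∧
  (∀ α, (∃ U ∈ S, (U ∩ L.wS α).Nonempty) →
    ∃ U ∈ S, (U ∩ L.wS α).Nonempty ∧ ∀ V ∈ S, (V ∩ L.wS α).Nonempty → U ⊆ V) ∧
  (∀ α, (∃ U ∈ Si, (U ∩ L.wS α).Nonempty) →
    ∃ U ∈ Si, (U ∩ L.wS α).Nonempty ∧ ∀ V ∈ Si, (V ∩ L.wS α).Nonempty → U ⊆ V) ∧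
  Si ⊆ S ∧
  (∀ X ∈ Si, ∀ Y ∈ S, Y ∉ Si → X ⊆ Y)

/-- `od` is the system of spheres-based two level CL revision operator induced
by `(Si, S)` (centred on `‖K‖`): if `S_α` (the smallest sphere of `S` meeting
`‖α‖`) is in `Si` then `K⊙α = ⋂(S_α ∩ ‖α‖)`; if `S_α ∈ S \ Si` then
`K⊙α = ⋂(‖K‖ ∪ (S_α ∩ ‖α‖))`; and if no sphere of `S` meets `‖α‖` then
`K⊙α = K`. -/
def IsSphereRevision (K : Set L.Sentence)
    (Si S : Set (Set (Set L.Sentence)))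
    (od : L.Sentence → Set L.Sentence) : Prop :=
  ∀ α,
    (∀ Sa ∈ S, (Sa ∩ L.wS α).Nonempty →
      (∀ V ∈ S, (V ∩ L.wS α).Nonempty → Sa ⊆ V) →
      (Sa ∈ Si → od α = L.th (Sa ∩ L.wS α)) ∧
      (Sa ∉ Si → od α = L.th (L.worldsOf K ∪ (Sa ∩ L.wS α)))) ∧
    ((∀ X ∈ S, X ∩ L.wS α = ∅) → od α = K)

end PropLanguage

open PropLanguage in
/-- under closure, consistency preservation, weak relative
success and N-recovery, revising by an inconsistent sentence leaves `K`
unchanged. -/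
theorem revision_by_inconsistent_is_identity
    (L : PropLanguage) (K : Set L.Sentence)
    (hK : L.IsBeliefSet K) (hKcons : L.Consistent K)
    (od : L.Sentence → Set L.Sentence)
    (hclo : L.Closure od) (hcp : L.ConsistencyPreservation K od)
    (hwrs : L.WeakRelativeSuccess K od) (hnr : L.NRecovery K od) :
    ∀ α, L.falsum ∈ L.Cn {α} → od α = K := by
  intro α hα
  -- od α is consistent
  have hodcons : L.Consistent (od α) := hcp hKcons α
  -- α ∉ od α, so od α ⊆ K
  have hnotmem : α ∉ od α := by
    intro hmem
    apply hodcons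
    have h1 : L.Cn {α} ⊆ L.Cn (od α) := L.cn_monotony _ _ (by simpa using hmem)
    have : L.falsum ∈ L.Cn (od α) := h1 hα
    rw [← hclo α] at this
    exact L.cn_inclusion _ this
  have hsub : od α ⊆ K := (hwrs α).resolve_left hnotmem
  -- impl α falsum ∈ Cn (od α)
  have hioaf : L.impl α L.falsum ∈ L.Cn (od α) := by
    have h0 : L.falsum ∈ L.Cn (∅ ∪ {α}) := by
      apply L.cn_monotony {α} _ (by simp) hα
    have h1 := (L.cn_deduction ∅ α L.falsum).mp h0
    exact L.cn_monotony ∅ (od α) (by simp) h1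
  -- K ⊆ od α
  have hsub2 : K ⊆ od α := by
    intro β hβ
    have hβ' : β ∈ L.Cn (od α ∪ {L.neg α}) := hnr α hβ
    have h2 : L.impl (L.neg α) β ∈ L.Cn (od α) := (L.cn_deduction _ _ _).mp hβ'
    have h3 : β ∈ L.Cn (L.Cn (od α)) := by
      apply L.cn_supraclassical
      intro v hf hn hc hd hi hb hall
      have ha := hall _ hioaf
      have hb' := hall _ h2
      rw [hi] at ha hb'
      rw [hn] at hb'
      rw [hf] at ha
      cases hv : v α <;> simp [hv] at ha hb' <;> simpa using hb'
    rw [L.cn_iteration, ← hclo α] at h3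
    exact h3
  exact Set.Subset.antisymm hsub hsub2
end

section
/- Let K be a consistent belief set and let ⊙ be an operator on K satisfying, for all sentences α, β: weak relative success (α ∈ K⊙α or K⊙α ⊆ K), closure (K⊙α = Cn(K⊙α)), inclusion (K⊙α ⊆ K + α), consistency preservation (if K is consistent then K⊙α is consistent), vacuity (if ¬α ∉ K then K + α ⊆ K⊙α), extensionality (if ⊢ α ↔ β then K⊙α = K⊙β), strict improvement (if α ∈ K⊙α and ⊢ α → β then β ∈ K⊙β), N-persistence (if ¬β ∈ K⊙β then ¬β ∈ K⊙α for all α), N-recovery (K ⊆ (K⊙α) + ¬α), disjunctive overlap (K⊙α ∩ K⊙β ⊆ K⊙(α ∨ β)) and disjunctive inclusion (if ¬α ∉ K⊙(α ∨ β) then K⊙(α ∨ β) ⊆ K⊙α). Define 𝕊_i to be the collection of all sets S of possible worlds such that either S = ‖K‖, or (∅ ≠ S ⊆ {w : w ∈ ‖K⊙α‖ for some α with ‖K⊙α‖ ⊆ ‖α‖} and ‖K⊙α‖ ⊆ S for every α with S ∩ ‖α‖ ≠ ∅); define 𝕊 to be the collection of all sets S of possible worlds such that either S = ‖K‖, or (∅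 ≠ S ⊆ {w : w ∈ ‖K⊙α‖ for some α with ‖K⊙α‖ ∩ ‖α‖ ≠ ∅}, ‖K⊙α‖ ⊆ S for every α with S ∩ ‖α‖ ≠ ∅, and for every α with S ∩ ‖α‖ = ∅, if S ∉ 𝕊_i then ‖K⊙α‖ ∩ S = ‖K‖). Then (𝕊_i, 𝕊) is a two level system of spheres centred on ‖K‖. -/
/-!
Read through possible worlds, the postulates become statements about the sets `‖K⊙α‖`.
Inclusion and vacuity give `‖K⊙α‖ = ‖K‖ ∩ ‖α‖` whenever `‖K‖` meets `‖α‖`; taking `α = ¬⊥`,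
every candidate sphere contains `‖K‖`, and every candidate sphere meeting `‖α‖` contains
`‖K⊙α‖`. N-persistence makes `‖K⊙α‖` meet `‖α‖` as soon as some sphere does. Two spheres `U`, `V`
are comparable: points of `U \ V` and `V \ U` lie in `‖K⊙α‖` and `‖K⊙β‖` with `U` meeting `‖α‖`
and `V` meeting `‖β‖`, and by disjunctive inclusion `‖K⊙(α ∨ β)‖`, which both spheres contain,
contains `‖K⊙α‖` or `‖K⊙β‖`. The smallest sphere meeting `‖α‖` is the intersection of all those
that do; weak relative success and N-recovery show that this intersection satisfies the last
defining clause of `𝕊`.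
-/

namespace PropLanguage

variable {L : PropLanguage}

theorem cn_subset_of_subset_cn {A B : Set L.Sentence} (h : B ⊆ L.Cn A) : L.Cn B ⊆ L.Cn A :=
  L.cn_iteration A ▸ L.cn_monotony B (L.Cn A) h

theorem mem_cn_of_mem_cn_singleton {A : Set L.Sentence} {φ ψ : L.Sentence} (hφ : φ ∈ L.Cn A)
    (hψ : ψ ∈ L.Cn {φ}) : ψ ∈ L.Cn A :=
  cn_subset_of_subset_cn (Set.singleton_subset_iff.2 hφ) hψ

section Tautologies

variable (φ ψ : L.Sentence)

theorem neg_falsum_mem_cn_empty : L.neg L.falsum ∈ L.Cn ∅ :=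
  L.cn_supraclassical _ _ fun _ hf hn _ _ _ _ _ => by simp [hn, hf]

theorem falsum_mem_cn_pair : L.falsum ∈ L.Cn {φ, L.neg φ} :=
  L.cn_supraclassical _ _ fun v _ hn _ _ _ _ hA => by
    have := hA (L.neg φ) (by simp)
    simp_all

theorem neg_mem_cn_impl_falsum : L.neg φ ∈ L.Cn {L.impl φ L.falsum} :=
  L.cn_supraclassical _ _ fun v hf hn _ _ hi _ hA => by
    have := hA (L.impl φ L.falsum) rfl
    simp_all

theorem mem_cn_impl_neg_falsum : φ ∈ L.Cn {L.impl (L.neg φ) L.falsum} :=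
  L.cn_supraclassical _ _ fun v hf hn _ _ hi _ hA => by
    have := hA (L.impl (L.neg φ) L.falsum) rfl
    simp_all

theorem disj_mem_cn_left : L.disj φ ψ ∈ L.Cn {φ} :=
  L.cn_supraclassical _ _ fun v _ _ _ hd _ _ hA => by
    have := hA φ rfl
    simp_all

theorem disj_mem_cn_right : L.disj φ ψ ∈ L.Cn {ψ} :=
  L.cn_supraclassical _ _ fun v _ _ _ hd _ _ hA => by
    have := hA ψ rfl
    simp_all

theorem falsum_mem_cn_disj_neg_neg : L.falsum ∈ L.Cn {L.disj φ ψ, L.neg φ, L.neg ψ} :=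
  L.cn_supraclassical _ _ fun v _ hn _ hd _ _ hA => by
    have h₁ := hA (L.disj φ ψ) (by simp)
    have h₂ := hA (L.neg φ) (by simp)
    have h₃ := hA (L.neg ψ) (by simp)
    simp_all

theorem biimpl_disj_comm_mem_cn_empty : L.biimpl (L.disj φ ψ) (L.disj ψ φ) ∈ L.Cn ∅ :=
  L.cn_supraclassical _ _ fun v _ _ _ hd _ hb _ => by simp [hb, hd, Bool.or_comm]

end Tautologies

theorem neg_mem_cn_of_not_consistent {A : Set L.Sentence} {φ : L.Sentence}
    (h : ¬L.Consistent (A ∪ {φ})) : L.neg φ ∈ L.Cn A :=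
  mem_cn_of_mem_cn_singleton ((L.cn_deduction A φ L.falsum).1 (not_not.1 h))
    (neg_mem_cn_impl_falsum φ)

theorem mem_cn_of_not_consistent_neg {A : Set L.Sentence} {φ : L.Sentence}
    (h : ¬L.Consistent (A ∪ {L.neg φ})) : φ ∈ L.Cn A :=
  mem_cn_of_mem_cn_singleton ((L.cn_deduction A (L.neg φ) L.falsum).1 (not_not.1 h))
    (mem_cn_impl_neg_falsum φ)

theorem exists_isWorld_superset {A : Set L.Sentence} (hA : L.Consistent A) :
    ∃ M, L.IsWorld M ∧ A ⊆ M := by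
  have hchain : ∀ c ⊆ {B | L.Consistent B}, IsChain (· ⊆ ·) c → c.Nonempty →
      ∃ ub ∈ {B | L.Consistent B}, ∀ s ∈ c, s ⊆ ub := by
    refine fun c hc hchain hne => ⟨⋃₀ c, fun hbot => ?_, fun _ => Set.subset_sUnion_of_mem⟩
    obtain ⟨A', hA'c, hA'fin, hA'⟩ := L.cn_compact _ _ hbot
    obtain ⟨t, htc, hA't⟩ :=
      hchain.directedOn.exists_mem_subset_of_finite_of_subset_sUnion hne hA'fin hA'c
    exact hc htc (L.cn_monotony _ _ hA't hA')
  obtain ⟨M, hAM, hM⟩ := zorn_subset_nonempty {B | L.Consistent B} hchain A hA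
  exact ⟨M, ⟨hM.prop, fun _ hM' hMM' => hM.eq_of_superset hM' hMM'⟩, hAM⟩

namespace IsWorld

variable {M : Set L.Sentence} {φ ψ : L.Sentence}

theorem cn_eq (hM : L.IsWorld M) : L.Cn M = M :=
  hM.2 _ (by rw [Consistent, L.cn_iteration]; exact hM.1) (L.cn_inclusion M)

theorem cn_subset {A : Set L.Sentence} (hM : L.IsWorld M) (hAM : A ⊆ M) : L.Cn A ⊆ M :=
  hM.cn_eq ▸ L.cn_monotony A M hAM

theorem neg_mem_iff (hM : L.IsWorld M) : L.neg φ ∈ M ↔ φ ∉ M := by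
  refine ⟨fun hnφ hφ => hM.1 (L.cn_monotony _ M ?_ (falsum_mem_cn_pair φ)), fun hφ => ?_⟩
  · exact Set.insert_subset hφ (Set.singleton_subset_iff.2 hnφ)
  · have hcons : L.Consistent (M ∪ {L.neg φ}) := fun hbot =>
      hφ (hM.cn_subset subset_rfl (mem_cn_of_not_consistent_neg (not_not.2 hbot)))
    exact hM.2 _ hcons Set.subset_union_left ▸ Set.mem_union_right M rfl

theorem disj_mem_iff (hM : L.IsWorld M) : L.disj φ ψ ∈ M ↔ φ ∈ M ∨ ψ ∈ M := by
  refine ⟨fun h => ?_, ?_⟩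
  · by_contra! hnot
    refine hM.1 (L.cn_monotony _ M ?_ (falsum_mem_cn_disj_neg_neg φ ψ))
    simp only [Set.insert_subset_iff, Set.singleton_subset_iff, hM.neg_mem_iff]
    exact ⟨h, hnot⟩
  · rintro (h | h)
    · exact hM.cn_subset (Set.singleton_subset_iff.2 h) (disj_mem_cn_left φ ψ)
    · exact hM.cn_subset (Set.singleton_subset_iff.2 h) (disj_mem_cn_right φ ψ)

end IsWorld

section Worlds

variable {A B M : Set L.Sentence} {α β : L.Sentence}

theorem worldsOf_anti (h : A ⊆ B) : L.worldsOf B ⊆ L.worldsOf A :=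
  fun _ hM => ⟨hM.1, h.trans hM.2⟩

theorem worldsOf_cn (A : Set L.Sentence) : L.worldsOf (L.Cn A) = L.worldsOf A :=
  Set.Subset.antisymm (worldsOf_anti (L.cn_inclusion A)) fun _ hM => ⟨hM.1, hM.1.cn_subset hM.2⟩

theorem worldsOf_nonempty (hA : L.Consistent A) : (L.worldsOf A).Nonempty :=
  exists_isWorld_superset hA

theorem mem_wS : M ∈ L.wS α ↔ L.IsWorld M ∧ α ∈ M := by
  rw [wS, worldsOf_cn]
  exact and_congr_right fun _ => Set.singleton_subset_iff

theorem worldsOf_subset_wS (h : α ∈ A) : L.worldsOf A ⊆ L.wS α :=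
  fun _ hM => mem_wS.2 ⟨hM.1, hM.2 h⟩

theorem mem_wS_neg_falsum (hM : L.IsWorld M) : M ∈ L.wS (L.neg L.falsum) :=
  mem_wS.2 ⟨hM, hM.cn_subset (Set.empty_subset M) neg_falsum_mem_cn_empty⟩

theorem wS_disj : L.wS (L.disj α β) = L.wS α ∪ L.wS β := by
  ext M
  simp only [Set.mem_union, mem_wS]
  exact ⟨fun ⟨hM, h⟩ => (hM.disj_mem_iff.1 h).imp (⟨hM, ·⟩) (⟨hM, ·⟩),
    fun h => h.elim (fun ⟨hM, h⟩ => ⟨hM, hM.disj_mem_iff.2 (.inl h)⟩)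
      (fun ⟨hM, h⟩ => ⟨hM, hM.disj_mem_iff.2 (.inr h)⟩)⟩

theorem worldsOf_union_singleton : L.worldsOf (A ∪ {α}) = L.worldsOf A ∩ L.wS α := by
  ext M
  simp only [worldsOf, Set.mem_inter_iff, Set.mem_ofPred_eq, mem_wS, Set.union_subset_iff,
    Set.singleton_subset_iff]
  tauto

theorem neg_notMem_of_mem_worldsOf (hM : M ∈ L.worldsOf A) (hα : α ∈ M) : L.neg α ∉ A :=
  fun hneg => hM.1.neg_mem_iff.1 (hM.2 hneg) hα

theorem worldsOf_inter_wS_nonempty_iff :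
    (L.worldsOf A ∩ L.wS α).Nonempty ↔ L.neg α ∉ L.Cn A := by
  refine ⟨fun ⟨M, hM, hMα⟩ => ?_, fun h => ?_⟩
  · exact neg_notMem_of_mem_worldsOf ((worldsOf_cn A).symm ▸ hM) (mem_wS.1 hMα).2
  · rw [← worldsOf_union_singleton]
    exact worldsOf_nonempty fun hbot => h (neg_mem_cn_of_not_consistent (not_not.2 hbot))

end Worlds

section Postulates

variable {K : Set L.Sentence} {od : L.Sentence → Set L.Sentence} {α β : L.Sentence}

theorem worldsOf_od_eq_of_inter_nonempty (hK : L.IsBeliefSet K) (h3 : L.Inclusion K od)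
    (h5 : L.Vacuity K od) (hα : (L.worldsOf K ∩ L.wS α).Nonempty) :
    L.worldsOf (od α) = L.worldsOf K ∩ L.wS α := by
  have hαK : L.neg α ∉ K := by
    rw [hK]
    exact worldsOf_inter_wS_nonempty_iff.1 hα
  rw [Set.Subset.antisymm (h3 α) (h5 α hαK), expand, worldsOf_cn, worldsOf_union_singleton]

theorem worldsOf_od_neg_falsum (hK : L.IsBeliefSet K) (hKcons : L.Consistent K)
    (h3 : L.Inclusion K od) (h5 : L.Vacuity K od) :
    L.worldsOf (od (L.neg L.falsum)) = L.worldsOf K := by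
  have hK_top : L.worldsOf K ∩ L.wS (L.neg L.falsum) = L.worldsOf K :=
    Set.inter_eq_left.2 fun _ hM => mem_wS_neg_falsum hM.1
  have hK_top_ne : (L.worldsOf K ∩ L.wS (L.neg L.falsum)).Nonempty := by
    rw [hK_top]
    exact worldsOf_nonempty hKcons
  rw [worldsOf_od_eq_of_inter_nonempty hK h3 h5 hK_top_ne, hK_top]

theorem mem_worldsOf_of_mem_worldsOf_od (h9 : L.NRecovery K od) {M : Set L.Sentence}
    (hM : M ∈ L.worldsOf (od α)) (hα : α ∉ M) : M ∈ L.worldsOf K :=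
  ⟨hM.1, (h9 α).trans <| hM.1.cn_subset <|
    Set.union_subset hM.2 (Set.singleton_subset_iff.2 (hM.1.neg_mem_iff.2 hα))⟩

theorem worldsOf_od_inter_wS_nonempty_iff (h2 : L.Closure od) :
    (L.worldsOf (od α) ∩ L.wS α).Nonempty ↔ L.neg α ∉ od α := by
  rw [worldsOf_inter_wS_nonempty_iff, ← h2]

theorem worldsOf_od_subset_worldsOf_od_disj (h2 : L.Closure od) (h6 : L.Extensionality od)
    (h8 : L.NPersistence od) (h11 : L.DisjunctiveInclusion od)
    (hα : (L.worldsOf (od α) ∩ L.wS α).Nonempty) :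
    L.worldsOf (od α) ⊆ L.worldsOf (od (L.disj α β)) ∨
      L.worldsOf (od β) ⊆ L.worldsOf (od (L.disj α β)) := by
  have hγ : (L.worldsOf (od (L.disj α β)) ∩ L.wS (L.disj α β)).Nonempty := by
    rw [worldsOf_od_inter_wS_nonempty_iff h2]
    intro hneg
    obtain ⟨M, hM, hMα⟩ := hα
    have hMγ := hM.2 (h8 α _ hneg)
    rw [hM.1.neg_mem_iff, hM.1.disj_mem_iff] at hMγ
    exact hMγ (.inl (mem_wS.1 hMα).2)
  obtain ⟨M, hM, hMγ⟩ := hγ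
  rcases hM.1.disj_mem_iff.1 (mem_wS.1 hMγ).2 with hMα | hMβ
  · exact .inl (worldsOf_anti (h11 α β (neg_notMem_of_mem_worldsOf hM hMα)))
  · rw [h6 _ _ (biimpl_disj_comm_mem_cn_empty α β)] at hM ⊢
    exact .inr (worldsOf_anti (h11 β α (neg_notMem_of_mem_worldsOf hM hMβ)))

end Postulates

def Absorbs (od : L.Sentence → Set L.Sentence) (U : Set (Set L.Sentence)) : Prop :=
  ∀ α, (U ∩ L.wS α).Nonempty → L.worldsOf (od α) ⊆ U

def innerSpheres (K : Set L.Sentence) (od : L.Sentence → Set L.Sentence) :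
    Set (Set (Set L.Sentence)) :=
  {U | U = L.worldsOf K ∨
    (U.Nonempty ∧ U ⊆ {w | ∃ α, w ∈ L.worldsOf (od α) ∧ L.worldsOf (od α) ⊆ L.wS α} ∧
      Absorbs od U)}

def spheres (K : Set L.Sentence) (od : L.Sentence → Set L.Sentence) :
    Set (Set (Set L.Sentence)) :=
  {U | U = L.worldsOf K ∨
    (U.Nonempty ∧
      U ⊆ {w | ∃ α, w ∈ L.worldsOf (od α) ∧ (L.worldsOf (od α) ∩ L.wS α).Nonempty} ∧
      Absorbs od U ∧
      ∀ α, U ∩ L.wS α = ∅ → U ∉ innerSpheres K od → L.worldsOf (od α) ∩ U = L.worldsOf K)}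

section Spheres

variable {K : Set L.Sentence} {od : L.Sentence → Set L.Sentence} {α δ : L.Sentence}
  {C U V X Y : Set (Set L.Sentence)} {M : Set L.Sentence}

theorem worldsOf_mem_innerSpheres : L.worldsOf K ∈ innerSpheres K od := .inl rfl

theorem worldsOf_mem_spheres : L.worldsOf K ∈ spheres K od := .inl rfl

theorem innerSpheres_subset_spheres : innerSpheres K od ⊆ spheres K od := by
  intro U hU
  obtain rfl | ⟨hne, hgen, habs⟩ := id hU
  · exact .inl rfl
  refine .inr ⟨hne, fun w hw => ?_, habs, fun _ _ hU' => absurd hU hU'⟩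
  obtain ⟨α, hwα, hα⟩ := hgen hw
  exact ⟨α, hwα, w, hwα, hα hwα⟩

theorem isWorld_of_mem_spheres (hU : U ∈ spheres K od) (hM : M ∈ U) : L.IsWorld M := by
  obtain rfl | ⟨-, hgen, -⟩ := hU
  · exact hM.1
  · obtain ⟨α, hMα, -⟩ := hgen hM
    exact hMα.1

theorem Absorbs.sInter {F : Set (Set (Set L.Sentence))} (hF : ∀ U ∈ F, Absorbs od U) :
    Absorbs od (⋂₀ F) :=
  fun α ⟨M, hMF, hMα⟩ _ hN U hU => hF U hU α ⟨M, hMF U hU, hMα⟩ hN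

theorem absorbs_of_mem_spheres (hK : L.IsBeliefSet K) (h3 : L.Inclusion K od)
    (h5 : L.Vacuity K od) (hU : U ∈ spheres K od) : Absorbs od U := by
  obtain rfl | ⟨-, -, habs, -⟩ := hU
  · exact fun α hα => (worldsOf_od_eq_of_inter_nonempty hK h3 h5 hα).trans_subset
      Set.inter_subset_left
  · exact habs

theorem worldsOf_subset_of_mem_spheres (hK : L.IsBeliefSet K) (hKcons : L.Consistent K)
    (h3 : L.Inclusion K od) (h5 : L.Vacuity K od) (hU : U ∈ spheres K od) :
    L.worldsOf K ⊆ U := by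
  obtain rfl | ⟨⟨M, hM⟩, -⟩ := id hU
  · exact subset_rfl
  rw [← worldsOf_od_neg_falsum hK hKcons h3 h5]
  exact absorbs_of_mem_spheres hK h3 h5 hU _
    ⟨M, hM, mem_wS_neg_falsum (isWorld_of_mem_spheres hU hM)⟩

theorem worldsOf_od_inter_wS_nonempty_of_mem_spheres (hK : L.IsBeliefSet K)
    (h2 : L.Closure od) (h3 : L.Inclusion K od) (h5 : L.Vacuity K od) (h8 : L.NPersistence od)
    (hU : U ∈ spheres K od) (hα : (U ∩ L.wS α).Nonempty) :
    (L.worldsOf (od α) ∩ L.wS α).Nonempty := by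
  obtain rfl | ⟨-, hgen, -⟩ := hU
  · rwa [worldsOf_od_eq_of_inter_nonempty hK h3 h5 hα, Set.inter_assoc, Set.inter_self]
  obtain ⟨M, hMU, hMα⟩ := hα
  obtain ⟨ε, hMε, -⟩ := hgen hMU
  -- N-persistence would carry `¬α` from `K⊙α` into `K⊙ε`, whose worlds include `M ∋ α`.
  exact (worldsOf_od_inter_wS_nonempty_iff h2).2 fun hneg =>
    neg_notMem_of_mem_worldsOf hMε (mem_wS.1 hMα).2 (h8 ε α hneg)

theorem exists_mem_worldsOf_od_of_mem_spheres (hU : U ∈ spheres K od) (hM : M ∈ U)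
    (hMK : M ∉ L.worldsOf K) : ∃ α, M ∈ L.worldsOf (od α) ∧ (U ∩ L.wS α).Nonempty := by
  obtain rfl | ⟨-, hgen, -, hout⟩ := hU
  · exact absurd hM hMK
  obtain ⟨α, hMα, -⟩ := hgen hM
  by_cases hUα : (U ∩ L.wS α).Nonempty
  · exact ⟨α, hMα, hUα⟩
  by_cases hUi : U ∈ innerSpheres K od
  · obtain rfl | ⟨-, hgen', -⟩ := hUi
    · exact absurd hM hMK
    obtain ⟨β, hMβ, hβ⟩ := hgen' hM
    exact ⟨β, hMβ, M, hM, hβ hMβ⟩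
  · exact absurd (hout α (Set.not_nonempty_iff_eq_empty.1 hUα) hUi ▸ ⟨hMα, hM⟩) hMK

theorem spheres_total (hK : L.IsBeliefSet K) (hKcons : L.Consistent K) (h2 : L.Closure od)
    (h3 : L.Inclusion K od) (h5 : L.Vacuity K od) (h6 : L.Extensionality od)
    (h8 : L.NPersistence od) (h11 : L.DisjunctiveInclusion od)
    (hU : U ∈ spheres K od) (hV : V ∈ spheres K od) : U ⊆ V ∨ V ⊆ U := by
  by_contra! hUV
  obtain ⟨u, huU, huV⟩ := Set.not_subset.1 hUV.1
  obtain ⟨v, hvV, hvU⟩ := Set.not_subset.1 hUV.2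
  obtain ⟨α, huα, hUα⟩ := exists_mem_worldsOf_od_of_mem_spheres hU huU
    fun hu => huV (worldsOf_subset_of_mem_spheres hK hKcons h3 h5 hV hu)
  obtain ⟨β, hvβ, hVβ⟩ := exists_mem_worldsOf_od_of_mem_spheres hV hvV
    fun hv => hvU (worldsOf_subset_of_mem_spheres hK hKcons h3 h5 hU hv)
  have hUγ : (U ∩ L.wS (L.disj α β)).Nonempty :=
    hUα.mono (Set.inter_subset_inter_right U (wS_disj ▸ Set.subset_union_left))
  have hVγ : (V ∩ L.wS (L.disj α β)).Nonempty :=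
    hVβ.mono (Set.inter_subset_inter_right V (wS_disj ▸ Set.subset_union_right))
  rcases worldsOf_od_subset_worldsOf_od_disj (β := β) h2 h6 h8 h11
    (worldsOf_od_inter_wS_nonempty_of_mem_spheres hK h2 h3 h5 h8 hU hUα) with h | h
  · exact huV (absorbs_of_mem_spheres hK h3 h5 hV _ hVγ (h huα))
  · exact hvU (absorbs_of_mem_spheres hK h3 h5 hU _ hUγ (h hvβ))

theorem inter_wS_nonempty_of_notMem_innerSpheres (hKcons : L.Consistent K)
    (hU : U ∈ spheres K od) (hUi : U ∉ innerSpheres K od)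
    (hδ : L.worldsOf (od δ) ⊆ L.wS δ) : (U ∩ L.wS δ).Nonempty := by
  obtain rfl | ⟨-, -, -, hout⟩ := hU
  · exact absurd worldsOf_mem_innerSpheres hUi
  by_contra h
  obtain ⟨M, hM⟩ := worldsOf_nonempty hKcons
  obtain ⟨hMδ, hMU⟩ : M ∈ L.worldsOf (od δ) ∩ U :=
    (hout δ (Set.not_nonempty_iff_eq_empty.1 h) hUi).symm ▸ hM
  exact h ⟨M, hMU, hδ hMδ⟩

theorem subset_of_mem_innerSpheres (hK : L.IsBeliefSet K) (hKcons : L.Consistent K)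
    (h3 : L.Inclusion K od) (h5 : L.Vacuity K od) (hX : X ∈ innerSpheres K od)
    (hY : Y ∈ spheres K od) (hYi : Y ∉ innerSpheres K od) : X ⊆ Y := by
  obtain rfl | ⟨-, hgen, -⟩ := hX
  · exact worldsOf_subset_of_mem_spheres hK hKcons h3 h5 hY
  intro M hM
  obtain ⟨α, hMα, hα⟩ := hgen hM
  exact absorbs_of_mem_spheres hK h3 h5 hY α
    (inter_wS_nonempty_of_notMem_innerSpheres hKcons hY hYi hα) hMα

theorem mem_innerSpheres_of_subset (hC : C.Nonempty) (habs : Absorbs od C)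
    (hU : U ∈ innerSpheres K od) (hUK : U ≠ L.worldsOf K) (hCU : C ⊆ U) :
    C ∈ innerSpheres K od := by
  obtain rfl | ⟨-, hgen, -⟩ := hU
  · exact absurd rfl hUK
  · exact .inr ⟨hC, hCU.trans hgen, habs⟩

theorem sInter_inter_wS_nonempty (hK : L.IsBeliefSet K) (h2 : L.Closure od)
    (h3 : L.Inclusion K od) (h5 : L.Vacuity K od) (h8 : L.NPersistence od)
    {F : Set (Set (Set L.Sentence))}
    (hF : ∀ U ∈ F, U ∈ spheres K od ∧ (U ∩ L.wS α).Nonempty) (hU : U ∈ F) :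
    (⋂₀ F ∩ L.wS α).Nonempty := by
  obtain ⟨M, hM, hMα⟩ :=
    worldsOf_od_inter_wS_nonempty_of_mem_spheres hK h2 h3 h5 h8 (hF U hU).1 (hF U hU).2
  exact ⟨M, fun V hV => absorbs_of_mem_spheres hK h3 h5 (hF V hV).1 α (hF V hV).2 hM, hMα⟩

theorem sInter_mem_spheres (hK : L.IsBeliefSet K) (hKcons : L.Consistent K)
    (h1 : L.WeakRelativeSuccess K od) (h3 : L.Inclusion K od)
    (h4 : L.ConsistencyPreservation K od) (h5 : L.Vacuity K od) (h9 : L.NRecovery K od)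
    {F : Set (Set (Set L.Sentence))} (hF : F ⊆ spheres K od) (hFK : L.worldsOf K ∉ F)
    (hU : U ∈ F) : ⋂₀ F ∈ spheres K od := by
  have hKC : L.worldsOf K ⊆ ⋂₀ F := fun _ hM V hV =>
    worldsOf_subset_of_mem_spheres hK hKcons h3 h5 (hF hV) hM
  have hCne : (⋂₀ F).Nonempty := (worldsOf_nonempty hKcons).mono hKC
  have habs : Absorbs od (⋂₀ F) :=
    Absorbs.sInter fun V hV => absorbs_of_mem_spheres hK h3 h5 (hF hV)
  obtain ⟨-, hgen, -⟩ := (hF hU).resolve_left (ne_of_mem_of_not_mem hU hFK)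
  refine .inr ⟨hCne, (Set.sInter_subset_of_mem hU).trans hgen, habs, fun δ hCδ hCi => ?_⟩
  have hCδ' : ∀ M ∈ ⋂₀ F, M ∉ L.wS δ := fun M hM hMδ =>
    Set.eq_empty_iff_forall_notMem.1 hCδ M ⟨hM, hMδ⟩
  refine Set.Subset.antisymm (fun M ⟨hMδ, hMC⟩ => mem_worldsOf_of_mem_worldsOf_od h9 hMδ
    fun hδ => hCδ' M hMC (mem_wS.2 ⟨hMδ.1, hδ⟩)) (Set.subset_inter ?_ hKC)
  refine (h1 δ).elim (fun hδ => absurd ?_ hCi) worldsOf_anti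
  -- Members of `F` outside `𝕊_i` meet `‖δ‖`, so they contain the nonempty `‖K⊙δ‖ ⊆ ‖δ‖`,
  -- which misses `⋂₀ F`; hence some member lies in `𝕊_i`, and then so does `⋂₀ F`.
  have hδ' : L.worldsOf (od δ) ⊆ L.wS δ := worldsOf_subset_wS hδ
  obtain ⟨V, hV, hVi⟩ : ∃ V ∈ F, V ∈ innerSpheres K od := by
    by_contra! hout
    obtain ⟨M, hM⟩ := worldsOf_nonempty (h4 hKcons δ)
    exact hCδ' M (fun V hV => absorbs_of_mem_spheres hK h3 h5 (hF hV) δ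
      (inter_wS_nonempty_of_notMem_innerSpheres hKcons (hF hV) (hout V hV) hδ') hM) (hδ' hM)
  exact mem_innerSpheres_of_subset hCne habs hVi (ne_of_mem_of_not_mem hV hFK)
    (Set.sInter_subset_of_mem hV)

theorem exists_least_innerSphere (hK : L.IsBeliefSet K) (hKcons : L.Consistent K)
    (h2 : L.Closure od) (h3 : L.Inclusion K od) (h5 : L.Vacuity K od) (h8 : L.NPersistence od)
    (hα : ∃ U ∈ innerSpheres K od, (U ∩ L.wS α).Nonempty) :
    ∃ U ∈ innerSpheres K od, (U ∩ L.wS α).Nonempty ∧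
      ∀ V ∈ innerSpheres K od, (V ∩ L.wS α).Nonempty → U ⊆ V := by
  by_cases hKα : (L.worldsOf K ∩ L.wS α).Nonempty
  · exact ⟨_, worldsOf_mem_innerSpheres, hKα, fun V hV _ =>
      worldsOf_subset_of_mem_spheres hK hKcons h3 h5 (innerSpheres_subset_spheres hV)⟩
  obtain ⟨U, hU, hUα⟩ := hα
  set F := {V ∈ innerSpheres K od | (V ∩ L.wS α).Nonempty}
  have hF : ∀ V ∈ F, V ∈ spheres K od ∧ (V ∩ L.wS α).Nonempty :=
    fun V hV => ⟨innerSpheres_subset_spheres hV.1, hV.2⟩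
  have hCα := sInter_inter_wS_nonempty hK h2 h3 h5 h8 hF (U := U) ⟨hU, hUα⟩
  have habs : Absorbs od (⋂₀ F) :=
    Absorbs.sInter fun V hV => absorbs_of_mem_spheres hK h3 h5 (hF V hV).1
  refine ⟨⋂₀ F, ?_, hCα, fun V hV hVα => Set.sInter_subset_of_mem ⟨hV, hVα⟩⟩
  exact mem_innerSpheres_of_subset (hCα.mono Set.inter_subset_left) habs hU
    (by rintro rfl; exact hKα hUα) (Set.sInter_subset_of_mem ⟨hU, hUα⟩)

theorem exists_least_sphere (hK : L.IsBeliefSet K) (hKcons : L.Consistent K)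
    (h1 : L.WeakRelativeSuccess K od) (h2 : L.Closure od) (h3 : L.Inclusion K od)
    (h4 : L.ConsistencyPreservation K od) (h5 : L.Vacuity K od) (h8 : L.NPersistence od)
    (h9 : L.NRecovery K od) (hα : ∃ U ∈ spheres K od, (U ∩ L.wS α).Nonempty) :
    ∃ U ∈ spheres K od, (U ∩ L.wS α).Nonempty ∧
      ∀ V ∈ spheres K od, (V ∩ L.wS α).Nonempty → U ⊆ V := by
  by_cases hKα : (L.worldsOf K ∩ L.wS α).Nonempty
  · exact ⟨_, worldsOf_mem_spheres, hKα, fun V hV _ =>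
      worldsOf_subset_of_mem_spheres hK hKcons h3 h5 hV⟩
  obtain ⟨U, hU, hUα⟩ := hα
  set F := {V ∈ spheres K od | (V ∩ L.wS α).Nonempty}
  refine ⟨⋂₀ F, sInter_mem_spheres hK hKcons h1 h3 h4 h5 h9 (fun V hV => hV.1)
      (fun hKF => hKα hKF.2) (U := U) ⟨hU, hUα⟩,
    sInter_inter_wS_nonempty hK h2 h3 h5 h8 (fun V hV => hV) (U := U) ⟨hU, hUα⟩,
    fun V hV hVα => Set.sInter_subset_of_mem ⟨hV, hVα⟩⟩

end Spheres

end PropLanguage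

open PropLanguage in
theorem constructed_pair_is_twoLevelSystem_general
    (L : PropLanguage) (K : Set L.Sentence)
    (hK : L.IsBeliefSet K) (hKcons : L.Consistent K)
    (od : L.Sentence → Set L.Sentence)
    (h1 : L.WeakRelativeSuccess K od) (h2 : L.Closure od)
    (h3 : L.Inclusion K od) (h4 : L.ConsistencyPreservation K od)
    (h5 : L.Vacuity K od) (h6 : L.Extensionality od)
    (h8 : L.NPersistence od)
    (h9 : L.NRecovery K od)
    (h11 : L.DisjunctiveInclusion od)
    (Si S : Set (Set (Set L.Sentence)))
    (hSi : Si = {Sp | Sp = L.worldsOf K ∨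
      (Sp.Nonempty ∧
       Sp ⊆ {w | ∃ α, w ∈ L.worldsOf (od α) ∧ L.worldsOf (od α) ⊆ L.wS α} ∧
       ∀ α, (Sp ∩ L.wS α).Nonempty → L.worldsOf (od α) ⊆ Sp)})
    (hS : S = {Sp | Sp = L.worldsOf K ∨
      (Sp.Nonempty ∧
       Sp ⊆ {w | ∃ α, w ∈ L.worldsOf (od α) ∧
                      (L.worldsOf (od α) ∩ L.wS α).Nonempty} ∧
       (∀ α, (Sp ∩ L.wS α).Nonempty → L.worldsOf (od α) ⊆ Sp) ∧
       (∀ α, Sp ∩ L.wS α = ∅ → Sp ∉ Si →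
          L.worldsOf (od α) ∩ Sp = L.worldsOf K))}) :
    L.IsTwoLevelSystem K Si S := by
  subst hSi hS
  show L.IsTwoLevelSystem K (innerSpheres K od) (spheres K od)
  have hSiS : innerSpheres K od ⊆ spheres K od := innerSpheres_subset_spheres
  have hKU : ∀ U ∈ spheres K od, L.worldsOf K ⊆ U :=
    fun _ hU => worldsOf_subset_of_mem_spheres hK hKcons h3 h5 hU
  have htotal : ∀ U ∈ spheres K od, ∀ V ∈ spheres K od, U ⊆ V ∨ V ⊆ U :=
    fun _ hU _ hV => spheres_total hK hKcons h2 h3 h5 h6 h8 h11 hU hV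
  exact ⟨fun _ hU _ hM => isWorld_of_mem_spheres hU hM, htotal,
    fun U hU V hV => htotal U (hSiS hU) V (hSiS hV), worldsOf_mem_spheres, hKU,
    worldsOf_mem_innerSpheres, fun U hU => hKU U (hSiS hU),
    fun _ => exists_least_sphere hK hKcons h1 h2 h3 h4 h5 h8 h9,
    fun _ => exists_least_innerSphere hK hKcons h2 h3 h5 h8, hSiS,
    fun _ hX _ hY hYi => subset_of_mem_innerSpheres hK hKcons h3 h5 hX hY hYi⟩

open PropLanguage in
/-- the pair `(Si, S)` constructed from an operator satisfying
the eleven listed postulates is a two level system of spheres centred on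
`‖K‖`. -/
theorem constructed_pair_is_twoLevelSystem
    (L : PropLanguage) (K : Set L.Sentence)
    (hK : L.IsBeliefSet K) (hKcons : L.Consistent K)
    (od : L.Sentence → Set L.Sentence)
    (h1 : L.WeakRelativeSuccess K od) (h2 : L.Closure od)
    (h3 : L.Inclusion K od) (h4 : L.ConsistencyPreservation K od)
    (h5 : L.Vacuity K od) (h6 : L.Extensionality od)
    (h7 : L.StrictImprovement od) (h8 : L.NPersistence od)
    (h9 : L.NRecovery K od) (h10 : L.DisjunctiveOverlap od)
    (h11 : L.DisjunctiveInclusion od)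
    (Si S : Set (Set (Set L.Sentence)))
    (hSi : Si = {Sp | Sp = L.worldsOf K ∨
      (Sp.Nonempty ∧
       Sp ⊆ {w | ∃ α, w ∈ L.worldsOf (od α) ∧ L.worldsOf (od α) ⊆ L.wS α} ∧
       ∀ α, (Sp ∩ L.wS α).Nonempty → L.worldsOf (od α) ⊆ Sp)})
    (hS : S = {Sp | Sp = L.worldsOf K ∨
      (Sp.Nonempty ∧
       Sp ⊆ {w | ∃ α, w ∈ L.worldsOf (od α) ∧
                      (L.worldsOf (od α) ∩ L.wS α).Nonempty} ∧
       (∀ α, (Sp ∩ L.wS α).Nonempty → L.worldsOf (od α) ⊆ Sp) ∧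
       (∀ α, Sp ∩ L.wS α = ∅ → Sp ∉ Si →
          L.worldsOf (od α) ∩ Sp = L.worldsOf K))}) :
    L.IsTwoLevelSystem K Si S :=
  constructed_pair_is_twoLevelSystem_general L K hK hKcons od h1 h2 h3 h4 h5 h6 h8 h9 h11 Si S hSi
    hS
end

section
/- Let K be a consistent belief set and let ⊙ be an operator on K satisfying, for all sentences α, β: weak relative success (α ∈ K⊙α or K⊙α ⊆ K), closure (K⊙α = Cn(K⊙α)), inclusion (K⊙α ⊆ K + α), consistency preservation (if K is consistent then K⊙α is consistent), vacuity (if ¬α ∉ K then K + α ⊆ K⊙α), extensionality (if ⊢ α ↔ β then K⊙α = K⊙β), strict improvement (if α ∈ K⊙α and ⊢ α → β then β ∈ K⊙β), N-persistence (if ¬β ∈ K⊙β then ¬β ∈ K⊙α for all α), N-recovery (K ⊆ (K⊙α) + ¬α), disjunctive overlap (K⊙α ∩ K⊙β ⊆ K⊙(α ∨ β)) and disjunctive inclusion (if ¬α ∉ K⊙(α ∨ β) then K⊙(α ∨ β) ⊆ K⊙α). Define the operator ⋆ on K by: K⋆α = (K⊙α) + α if ¬α ∉ K⊙α, and K⋆α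 = Cn({α}) if ¬α ∈ K⊙α; and define C_H = {α : α ∈ K⊙α}. Then condition (C_H - ⋆) holds: for all sentences α, β, if α ∉ C_H and β ∈ C_H, then ¬α ∈ K⋆β. -/
open PropLanguage in
/-- for the operator `⋆` and set `C_H` constructed from `⊙`,
condition `(C_H - ⋆)` holds. -/
theorem constructed_condCH_star
    (L : PropLanguage) (K : Set L.Sentence)
    (hK : L.IsBeliefSet K) (hKcons : L.Consistent K)
    (od : L.Sentence → Set L.Sentence)
    (h1 : L.WeakRelativeSuccess K od) (h2 : L.Closure od)
    (h3 : L.Inclusion K od) (h4 : L.ConsistencyPreservation K od)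
    (h5 : L.Vacuity K od) (h6 : L.Extensionality od)
    (h7 : L.StrictImprovement od) (h8 : L.NPersistence od)
    (h9 : L.NRecovery K od) (h10 : L.DisjunctiveOverlap od)
    (h11 : L.DisjunctiveInclusion od)
    (star : L.Sentence → Set L.Sentence)
    (hstar1 : ∀ α, L.neg α ∉ od α → star α = L.expand (od α) α)
    (hstar2 : ∀ α, L.neg α ∈ od α → star α = L.Cn {α})
    (CH : Set L.Sentence) (hCH : CH = {α | α ∈ od α}) :
    ∀ α β, α ∉ CH → β ∈ CH → L.neg α ∈ star β := by
  intro α β hα hβ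
  rw [hCH] at hα hβ
  simp only [Set.mem_setOf_eq] at hα hβ
  have hodβcons : L.Consistent (od β) := h4 hKcons β
  have hnbβ : L.neg β ∉ od β := by
    intro hnb
    apply hodβcons
    apply L.cn_supraclassical
    intro v hf hn hc hd hi hb hA
    have h1' := hA β hβ
    have h2' := hA _ hnb
    rw [hn] at h2'
    simp [h1'] at h2'
  rw [hstar1 β hnbβ]
  by_contra hna
  set δ := L.conj α β with hδ
  have htaut : L.biimpl β (L.disj δ β) ∈ L.Cn ∅ := by
    apply L.cn_supraclassical
    intro v hf hn hc hd hi hb hA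
    rw [hb, hd, hδ, hc]
    cases hva : v α <;> cases hvb : v β <;> simp [hva, hvb]
  have hext : od β = od (L.disj δ β) := h6 _ _ htaut
  have hndnot : L.neg δ ∉ od (L.disj δ β) := by
    rw [← hext]
    intro hnd
    apply hna
    show L.neg α ∈ L.Cn (od β ∪ {β})
    rw [L.cn_deduction]
    apply L.cn_supraclassical
    intro v hf hn hc hd hi hb hA
    have h2' := hA _ hnd
    rw [hn, hδ, hc] at h2'
    rw [hi, hn]
    cases hva : v α <;> cases hvb : v β <;> simp [hva, hvb] at h2' ⊢
  have hβδ : β ∈ od δ := h11 δ β hndnot (hext ▸ hβ)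
  have hδnot : δ ∉ od δ := by
    intro hdd
    apply hα
    apply h7 δ α hdd
    apply L.cn_supraclassical
    intro v hf hn hc hd hi hb hA
    rw [hi, hδ, hc]
    cases v α <;> cases v β <;> simp
  rcases h1 δ with hdd | hsubK
  · exact hδnot hdd
  · have hβK : β ∈ K := hsubK hβδ
    by_cases hndK : L.neg δ ∈ K
    · have hnaK : L.neg α ∈ K := by
        rw [hK]
        apply L.cn_supraclassical
        intro v hf hn hc hd hi hb hA
        have h1' := hA _ hβK
        have h2' := hA _ hndK
        rw [hn, hδ, hc] at h2'
        rw [hn]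
        cases hva : v α <;> simp [h1', hva] at h2' ⊢
      have hnbK : L.neg β ∉ K := by
        intro hnb
        apply hKcons
        apply L.cn_supraclassical
        intro v hf hn hc hd hi hb hA
        have h1' := hA _ hβK
        have h2' := hA _ hnb
        rw [hn] at h2'
        simp [h1'] at h2'
      have hvac := h5 β hnbK
      have hin : L.neg α ∈ od β :=
        hvac (L.cn_inclusion _ (Set.mem_union_left _ hnaK))
      exact hna (L.cn_inclusion _ (Set.mem_union_left _ hin))
    · apply hδnot
      exact h5 δ hndK (L.cn_inclusion _ (Set.mem_union_right _ rfl))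
end

section
/- Let K be a consistent belief set, let ⋆ be an AGM revision on K, and let C_H, C_L ⊆ L be sets such that: C_L satisfies credibility of logical equivalents and element consistency; C_H ∩ C_L = ∅; C_H satisfies element consistency, credibility lower bounding and single sentence closure; and conditions ((C_H ∪ C_L) - ⋆) and (C_H - ⋆) hold. Then the two level CL revision operator ⊙ induced by ⋆, C_H and C_L satisfies vacuity: for all sentences α, if ¬α ∉ K then K + α ⊆ K⊙α. -/
open PropLanguage in
/-- the two level CL revision operator induced by an AGM
revision `⋆` and sets `C_H`, `C_L` with the stated properties satisfies
vacuity. -/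
theorem twoLevelCL_AGM_vacuity
    (L : PropLanguage) (K : Set L.Sentence)
    (hK : L.IsBeliefSet K) (hKcons : L.Consistent K)
    (star : L.Sentence → Set L.Sentence) (CH CL : Set L.Sentence)
    (hstar : L.IsAGMRevision K star)
    (hCLeq : L.CredLogEquiv CL) (hCLcons : L.ElementConsistency CL)
    (hdisj : CH ∩ CL = ∅)
    (hCHcons : L.ElementConsistency CH) (hCHlb : L.CredLowerBound K CH)
    (hCHclos : L.SingleSentenceClosure CH)
    (hcond1 : L.CondCStar K star (CH ∪ CL)) (hcond2 : L.CondCStar K star CH)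
    (od : L.Sentence → Set L.Sentence)
    (hod : L.IsTwoLevelCL K od star CH CL) :
    ∀ α, L.neg α ∉ K → L.expand K α ⊆ od α := by
  intro α hna
  obtain ⟨h1, h2, h3, h4, h5, h6, h7, h8⟩ := hstar
  set t := L.neg L.falsum with ht
  -- t is a tautology
  have htaut : t ∈ L.Cn ∅ := by
    apply L.cn_supraclassical
    intro v hf hn _ _ _ _ _
    rw [hn, hf]; rfl
  have htK : t ∈ K := by
    have := L.cn_monotony ∅ K (Set.empty_subset K) htaut
    rwa [← hK] at this
  -- ¬t ∉ K
  have hnt : L.neg t ∉ K := by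
    intro h
    apply hKcons
    rw [hK]
    apply L.cn_supraclassical
    intro v hf hn _ _ _ _ hall
    exfalso
    have := hall _ (hK ▸ h)
    rw [hn, hn, hf] at this
    simp at this
  -- K ⋆ t = K
  have hstarT : star t = K := by
    apply le_antisymm
    · have := h3 t
      have heq : L.expand K t = K := by
        unfold PropLanguage.expand
        have : K ∪ {t} = K := by
          apply Set.union_eq_self_of_subset_right
          simpa using htK
        rw [this, ← hK]
      rwa [heq] at this
    · have := h4 t hnt
      calc K ⊆ L.Cn (K ∪ {t}) := fun x hx => L.cn_inclusion _ (Set.mem_union_left _ hx)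
        _ ⊆ star t := this
  -- α ∈ CH
  have hCH : α ∈ CH := by
    by_contra hnotCH
    exact hna (hstarT ▸ hcond2 α t hnotCH (hCHlb hKcons htK))
  rw [(hod α).1 hCH]
  exact h4 α hna
end

section
/- Let K be a consistent belief set, let ⋆ be an AGM revision on K, and let C_H, C_L ⊆ L be sets such that: C_L satisfies credibility of logical equivalents and element consistency; C_H ∩ C_L = ∅; C_H satisfies element consistency, credibility lower bounding and single sentence closure; and conditions ((C_H ∪ C_L) - ⋆) and (C_H - ⋆) hold. Then the two level CL revision operator ⊙ induced by ⋆, C_H and C_L satisfies disjunctive inclusion: for all sentences α, β, if ¬α ∉ K⊙(α ∨ β) then K⊙(α ∨ β) ⊆ K⊙α. -/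
open PropLanguage in
/-- the two level CL revision operator induced by an AGM
revision `⋆` and sets `C_H`, `C_L` with the stated properties satisfies
disjunctive inclusion. -/
theorem twoLevelCL_AGM_disjunctiveInclusion
    (L : PropLanguage) (K : Set L.Sentence)
    (hK : L.IsBeliefSet K) (hKcons : L.Consistent K)
    (star : L.Sentence → Set L.Sentence) (CH CL : Set L.Sentence)
    (hstar : L.IsAGMRevision K star)
    (hCLeq : L.CredLogEquiv CL) (hCLcons : L.ElementConsistency CL)
    (hdisj : CH ∩ CL = ∅)
    (hCHcons : L.ElementConsistency CH) (hCHlb : L.CredLowerBound K CH)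
    (hCHclos : L.SingleSentenceClosure CH)
    (hcond1 : L.CondCStar K star (CH ∪ CL)) (hcond2 : L.CondCStar K star CH)
    (od : L.Sentence → Set L.Sentence)
    (hod : L.IsTwoLevelCL K od star CH CL) :
    ∀ α β, L.neg α ∉ od (L.disj α β) → od (L.disj α β) ⊆ od α := by
  obtain ⟨hs1, hs2, hs3, hs4, hs5, hs6, hs7, hs8⟩ := hstar
  intro α β hneg
  have hdisjCn : L.disj α β ∈ L.Cn {α} := by
    apply L.cn_supraclassical
    intro v _ _ _ hv _ _ hA
    rw [hv]
    simp [hA α rfl]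
  obtain ⟨hDH, hDL, hDN⟩ := hod (L.disj α β)
  obtain ⟨hAH, hAL, hAN⟩ := hod α
  by_cases hαH : α ∈ CH
  · have hDinH : L.disj α β ∈ CH := hCHclos α hαH hdisjCn
    rw [hDH hDinH] at hneg ⊢
    rw [hAH hαH]
    exact hs8 α β hneg
  · by_cases hDinH : L.disj α β ∈ CH
    · exact absurd (by rw [hDH hDinH]; exact hcond2 α _ hαH hDinH) hneg
    · by_cases hDinL : L.disj α β ∈ CL
      · rw [hDL hDinL] at hneg ⊢
        by_cases hαL : α ∈ CL
        · rw [hAL hαL]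
          by_cases hnK : L.neg α ∈ star (L.disj α β)
          · have hnotK : L.neg α ∉ K := fun h => hneg ⟨hnK, h⟩
            have hKs : K ⊆ star α := fun x hx =>
              hs4 α hnotK (L.cn_inclusion _ (Set.mem_union_left _ hx))
            exact fun x hx => ⟨hKs hx.2, hx.2⟩
          · exact fun x hx => ⟨hs8 α β hnK hx.1, hx.2⟩
        · rw [hAN (by simp [hαH, hαL])]
          exact fun x hx => hx.2
      · rw [hDN (by simp [hDinH, hDinL])] at hneg ⊢
        by_cases hαL : α ∈ CL
        · rw [hAL hαL]
          have hKs : K ⊆ star α := fun x hx =>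
            hs4 α hneg (L.cn_inclusion _ (Set.mem_union_left _ hx))
          exact fun x hx => ⟨hKs hx, hx⟩
        · rw [hAN (by simp [hαH, hαL])]
end
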